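/- Let ε > 0, b > 0, m ≥ 1, and let μ_init < μ_upd be reals with μ_upd − μ_init = εb. Let S ⊆ {1,…,m} with |S| = d·m (so d ∈ [0,1] is the fraction of appeared users), and let x₁, …, x_m be independent random variables with x_i ~ Laplace(μ_upd, b) for i ∈ S and x_i ~ Laplace(μ_init, b) for i ∉ S, together with an independent L ~ Laplace(0, 1/(εm)). Define the estimator d̃ = ((1/m)·∑_{i=1}^m x_i − μ_init)/(μ_upd − μ_init) + L. Then E[d̃] = d and Var(d̃) = E[(d̃ − d)²] = 2(m + 1)/(m²ε²), independently of the choice of μ_init, μ_upd and b. -/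

import Mathlib

open MeasureTheory ProbabilityTheory

/-- The density of the Laplace distribution with location `μ` and scale `b`. -/
noncomputable def laplacePdf (μ b x : ℝ) : ℝ :=
  (1 / (2 * b)) * Real.exp (-|x - μ| / b)

/-- The Laplace distribution with location `μ` and scale `b`, as a measure on ℝ. -/
noncomputable def laplaceMeasure (μ b : ℝ) : Measure ℝ :=
  volume.withDensity fun x => ENNReal.ofReal (laplacePdf μ b x)

/-!
After substituting `μ_upd = μ_init + εb`, the estimator is `∑ₒ wₒ Yₒ + c` for the independent
family `Y = (L, x₁, …, x_m)`, with weights `1` on `L` and `1/(mεb)` on each `xᵢ`. A Laplace(μ, b)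
variable has mean `μ` and variance `2b²`, because `∫ tⁿ e^{-|t|} dt` is `2·n!` for even `n` and `0`
for odd `n`. Hence the mean is `d`, and the mean squared error is the variance, which splits over
the independent summands: `2/(εm)² + m · 2b²/(mεb)² = 2(m+1)/(m²ε²)`.
-/

open Real Set
open scoped Nat ENNReal

lemma integrableOn_pow_mul_exp_neg_Ioi (n : ℕ) :
    IntegrableOn (fun t : ℝ => t ^ n * exp (-t)) (Ioi 0) := by
  refine (GammaIntegral_convergent (s := n + 1) (by positivity)).congr_fun
    (fun t _ => ?_) measurableSet_Ioi
  simp only [add_sub_cancel_right, rpow_natCast, mul_comm]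

lemma integral_pow_mul_exp_neg_Ioi (n : ℕ) : ∫ t in Ioi (0 : ℝ), t ^ n * exp (-t) = n ! := by
  rw [← Gamma_nat_eq_factorial, Gamma_eq_integral (by positivity)]
  refine setIntegral_congr_fun measurableSet_Ioi (fun t _ => ?_)
  rw [add_sub_cancel_right, rpow_natCast, mul_comm]

lemma integrable_comp_abs_of_integrableOn_Ioi {f : ℝ → ℝ} (hf : IntegrableOn f (Ioi 0)) :
    Integrable fun x => f |x| := by
  have h_pos : IntegrableOn (fun x => f |x|) (Ioi 0) :=
    hf.congr_fun (fun x hx => by rw [abs_of_pos hx]) measurableSet_Ioi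
  have h_neg : IntegrableOn (fun x => f |x|) (Iic 0) := by
    rw [← integrableOn_Ici_iff_integrableOn_Ioi] at h_pos
    simpa [Function.comp_def] using h_pos.comp_neg
  rw [← integrableOn_univ, ← Iic_union_Ioi (a := (0 : ℝ))]
  exact h_neg.union h_pos

lemma integrable_pow_mul_exp_neg_abs (n : ℕ) :
    Integrable fun t : ℝ => t ^ n * exp (-|t|) := by
  refine (integrable_comp_abs_of_integrableOn_Ioi (integrableOn_pow_mul_exp_neg_Ioi n)).mono'
    (by fun_prop) (Filter.Eventually.of_forall fun t => ?_)
  simp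

lemma integral_pow_mul_exp_neg_abs_of_even {n : ℕ} (hn : Even n) :
    ∫ t : ℝ, t ^ n * exp (-|t|) = 2 * n ! := by
  calc ∫ t : ℝ, t ^ n * exp (-|t|) = ∫ t : ℝ, |t| ^ n * exp (-|t|) := by simp_rw [hn.pow_abs]
    _ = 2 * n ! := by
      rw [integral_comp_abs (f := fun t => t ^ n * exp (-t)), integral_pow_mul_exp_neg_Ioi]

lemma integral_pow_mul_exp_neg_abs_of_odd {n : ℕ} (hn : Odd n) :
    ∫ t : ℝ, t ^ n * exp (-|t|) = 0 := by
  have h := integral_neg_eq_self (fun t : ℝ => t ^ n * exp (-|t|)) volume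
  simp only [hn.neg_pow, abs_neg, neg_mul, integral_neg] at h
  linarith

lemma integrable_comp_mul_add_iff {f : ℝ → ℝ} {a : ℝ} (ha : a ≠ 0) (c : ℝ) :
    Integrable (fun t => f (a * t + c)) ↔ Integrable f := by
  rw [integrable_comp_mul_left_iff (fun y => f (y + c)) ha]
  exact ⟨fun h => by simpa using h.comp_add_right (-c), fun h => h.comp_add_right c⟩

lemma integral_comp_mul_add (f : ℝ → ℝ) (a c : ℝ) :
    ∫ t, f (a * t + c) = |a⁻¹| * ∫ x, f x := by
  rw [Measure.integral_comp_mul_left (fun y => f (y + c)), integral_add_right_eq_self,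
    smul_eq_mul]

lemma laplacePdf_nonneg {b : ℝ} (hb : 0 ≤ b) (μ x : ℝ) : 0 ≤ laplacePdf μ b x := by
  unfold laplacePdf; positivity

lemma laplacePdf_mul_add {b : ℝ} (hb : 0 < b) (μ t : ℝ) :
    laplacePdf μ b (b * t + μ) = exp (-|t|) / (2 * b) := by
  rw [laplacePdf, add_sub_cancel_right, abs_mul, abs_of_pos hb, neg_div,
    mul_div_cancel_left₀ _ hb.ne']
  ring

lemma toReal_laplacePdf_mul_add {b : ℝ} (hb : 0 < b) (μ t : ℝ) :
    (ENNReal.ofReal (laplacePdf μ b (b * t + μ))).toReal = exp (-|t|) * (2 * b)⁻¹ := by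
  rw [ENNReal.toReal_ofReal (laplacePdf_nonneg hb.le _ _), laplacePdf_mul_add hb, div_eq_mul_inv]

lemma integrable_laplaceMeasure_iff {μ b : ℝ} (hb : 0 < b) {g : ℝ → ℝ} :
    Integrable g (laplaceMeasure μ b) ↔ Integrable fun t => g (b * t + μ) * exp (-|t|) := by
  rw [laplaceMeasure, integrable_withDensity_iff (by unfold laplacePdf; fun_prop) (by simp),
    ← integrable_comp_mul_add_iff hb.ne' μ]
  refine Iff.trans ?_ (integrable_mul_const_iff (c := (2 * b)⁻¹)
    (isUnit_iff_ne_zero.2 (by positivity)) _)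
  simp only [toReal_laplacePdf_mul_add hb, mul_assoc]

lemma integral_laplaceMeasure {μ b : ℝ} (hb : 0 < b) (g : ℝ → ℝ) :
    ∫ x, g x ∂laplaceMeasure μ b = (∫ t, g (b * t + μ) * exp (-|t|)) / 2 := by
  rw [laplaceMeasure, integral_withDensity_eq_integral_toReal_smul (by unfold laplacePdf; fun_prop)
      (by simp)]
  calc ∫ x, (ENNReal.ofReal (laplacePdf μ b x)).toReal • g x
      = b * ∫ t, (ENNReal.ofReal (laplacePdf μ b (b * t + μ))).toReal • g (b * t + μ) := by
        rw [integral_comp_mul_add (fun x => (ENNReal.ofReal (laplacePdf μ b x)).toReal • g x),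
          abs_inv, abs_of_pos hb, mul_inv_cancel_left₀ hb.ne']
    _ = b * ∫ t, (2 * b)⁻¹ * (g (b * t + μ) * exp (-|t|)) := by
        simp only [toReal_laplacePdf_mul_add hb, smul_eq_mul]
        congr 2 with t
        ring
    _ = (∫ t, g (b * t + μ) * exp (-|t|)) / 2 := by
        rw [integral_const_mul]
        field_simp

lemma memLp_id_laplaceMeasure {μ b : ℝ} (hb : 0 < b) : MemLp id 2 (laplaceMeasure μ b) := by
  refine (memLp_two_iff_integrable_sq aestronglyMeasurable_id).2
    ((integrable_laplaceMeasure_iff hb).2 ?_)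
  have h := integrable_pow_mul_exp_neg_abs
  refine (((h 2).const_mul (b ^ 2)).add (((h 1).const_mul (2 * b * μ)).add
    ((h 0).const_mul (μ ^ 2)))).congr (Filter.Eventually.of_forall fun t => ?_)
  simp only [id, Pi.add_apply, pow_one, pow_zero, one_mul]
  ring

lemma integral_id_laplaceMeasure {μ b : ℝ} (hb : 0 < b) : ∫ x, x ∂laplaceMeasure μ b = μ := by
  have h := integrable_pow_mul_exp_neg_abs
  have h_split : (fun t => (b * t + μ) * exp (-|t|))
      = fun t => b * (t ^ 1 * exp (-|t|)) + μ * (t ^ 0 * exp (-|t|)) := by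
    ext t; ring
  rw [integral_laplaceMeasure hb (fun x => x), h_split,
    integral_add ((h 1).const_mul b) ((h 0).const_mul μ), integral_const_mul, integral_const_mul,
    integral_pow_mul_exp_neg_abs_of_odd odd_one, integral_pow_mul_exp_neg_abs_of_even Even.zero]
  simp

lemma variance_id_laplaceMeasure {μ b : ℝ} (hb : 0 < b) :
    Var[id; laplaceMeasure μ b] = 2 * b ^ 2 := by
  rw [variance_eq_integral measurable_id.aemeasurable]
  simp only [id, integral_id_laplaceMeasure hb]
  rw [integral_laplaceMeasure hb]
  simp only [add_sub_cancel_right, mul_pow, mul_assoc]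
  rw [integral_const_mul, integral_pow_mul_exp_neg_abs_of_even even_two]
  norm_num [Nat.factorial]
  ring

lemma ProbabilityTheory.HasLaw.memLp_of_memLp_id {Ω : Type*} [MeasurableSpace Ω]
    {P : Measure Ω} {X : Ω → ℝ} {μ : Measure ℝ} (hX : HasLaw X μ P) {p : ℝ≥0∞} (h : MemLp id p μ) : MemLp X p P := by
  rw [← hX.map_eq] at h
  exact (memLp_map_measure_iff aestronglyMeasurable_id hX.aemeasurable).1 h

lemma ProbabilityTheory.iIndepFun.variance_sum_mul_add_const {Ω ι : Type*} [MeasurableSpace Ω]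
    [Fintype ι] {P : Measure Ω} [IsProbabilityMeasure P] {X : ι → Ω → ℝ} (hX : iIndepFun X P)
    (hmem : ∀ i, MemLp (X i) 2 P) (w : ι → ℝ) (c : ℝ) :
    Var[fun ω => ∑ i, w i * X i ω + c; P] = ∑ i, w i ^ 2 * Var[X i; P] := by
  have hwX : ∀ i, MemLp (fun ω => w i * X i ω) 2 P := fun i => (hmem i).const_mul (w i)
  rw [variance_add_const (memLp_finsetSum _ fun i _ => hwX i).aestronglyMeasurable]
  have h_indep : Set.Pairwise (Finset.univ : Finset ι) fun i j =>
      IndepFun (fun ω => w i * X i ω) (fun ω => w j * X j ω) P := fun i _ j _ hij =>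
    (hX.indepFun hij).comp (measurable_const_mul (w i)) (measurable_const_mul (w j))
  have h_sum := IndepFun.variance_sum (fun i _ => hwX i) h_indep
  simp only [variance_const_mul] at h_sum
  rw [← h_sum]
  congr 1 with ω
  simp

section LaplaceFamily

variable {Ω ι : Type*} [MeasurableSpace Ω] [Fintype ι] {P : Measure Ω} [IsProbabilityMeasure P]
  {Y : ι → Ω → ℝ} {loc scale : ι → ℝ}

lemma integral_sum_mul_add_const_of_hasLaw_laplace
    (hY : ∀ i, HasLaw (Y i) (laplaceMeasure (loc i) (scale i)) P) (hscale : ∀ i, 0 < scale i)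
    (w : ι → ℝ) (c : ℝ) :
    ∫ ω, ∑ i, w i * Y i ω + c ∂P = ∑ i, w i * loc i + c := by
  have hwY : ∀ i, Integrable (fun ω => w i * Y i ω) P := fun i =>
    (((hY i).memLp_of_memLp_id (memLp_id_laplaceMeasure (hscale i))).integrable
      one_le_two).const_mul (w i)
  rw [integral_add (integrable_finsetSum _ fun i _ => hwY i) (integrable_const c),
    integral_finsetSum _ fun i _ => hwY i, integral_const, probReal_univ, one_smul]
  simp_rw [integral_const_mul, (hY _).integral_eq, integral_id_laplaceMeasure (hscale _)]

lemma variance_sum_mul_add_const_of_hasLaw_laplace (hindep : iIndepFun Y P)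
    (hY : ∀ i, HasLaw (Y i) (laplaceMeasure (loc i) (scale i)) P) (hscale : ∀ i, 0 < scale i)
    (w : ι → ℝ) (c : ℝ) :
    Var[fun ω => ∑ i, w i * Y i ω + c; P] = ∑ i, w i ^ 2 * (2 * scale i ^ 2) := by
  rw [hindep.variance_sum_mul_add_const
    (fun i => (hY i).memLp_of_memLp_id (memLp_id_laplaceMeasure (hscale i)))]
  simp_rw [(hY _).variance_eq, variance_id_laplaceMeasure (hscale _)]

end LaplaceFamily

theorem laplace_density_estimator_moments_general {Ω : Type*} [MeasureSpace Ω]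
    [IsProbabilityMeasure (ℙ : Measure Ω)] (ε b : ℝ) (hε : 0 < ε) (hb : 0 < b)
    (m : ℕ) (hm : 1 ≤ m) (μinit μupd : ℝ)
    (hεb : μupd - μinit = ε * b)
    (S : Finset (Fin m)) (d : ℝ) (hd : (S.card : ℝ) = d * m)
    (x : Fin m → Ω → ℝ) (hxmeas : ∀ i, Measurable (x i))
    (hxlaw : ∀ i, Measure.map (x i) ℙ =
      if i ∈ S then laplaceMeasure μupd b else laplaceMeasure μinit b)
    (L : Ω → ℝ) (hLmeas : Measurable L)
    (hLlaw : Measure.map L ℙ = laplaceMeasure 0 (1 / (ε * m)))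
    (hindep : iIndepFun
      (fun o : Option (Fin m) => o.elim L x) ℙ) :
    (∫ ω, ((1 / m) * ∑ i, x i ω - μinit) / (μupd - μinit) + L ω ∂ℙ) = d ∧
    (∫ ω, (((1 / m) * ∑ i, x i ω - μinit) / (μupd - μinit) + L ω - d) ^ 2 ∂ℙ) =
      2 * (m + 1) / ((m : ℝ) ^ 2 * ε ^ 2) := by
  obtain rfl : μupd = μinit + ε * b := by linarith
  have hm0 : (m : ℝ) ≠ 0 := Nat.cast_ne_zero.2 (by omega)
  set Y : Option (Fin m) → Ω → ℝ := fun o => o.elim L x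
  set loc : Option (Fin m) → ℝ := fun o => o.elim 0 fun i => μinit + if i ∈ S then ε * b else 0
  set scale : Option (Fin m) → ℝ := fun o => o.elim (1 / (ε * m)) fun _ => b
  set w : Option (Fin m) → ℝ := fun o => o.elim 1 fun _ => 1 / (m * (ε * b))
  have hscale : ∀ o, 0 < scale o := by
    rintro (_ | i) <;> simp only [scale, Option.elim_none, Option.elim_some] <;> positivity
  have hY : ∀ o, HasLaw (Y o) (laplaceMeasure (loc o) (scale o)) ℙ := by
    rintro (_ | i)
    · exact ⟨hLmeas.aemeasurable, hLlaw⟩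
    · exact ⟨(hxmeas i).aemeasurable, (hxlaw i).trans (by split_ifs <;> simp [loc, scale, *])⟩
  have hest : ∀ ω, ((1 / m) * ∑ i, x i ω - μinit) / (μinit + ε * b - μinit) + L ω
      = ∑ o, w o * Y o ω + -μinit / (ε * b) := by
    intro ω
    simp only [Fintype.sum_option, w, Y, Option.elim_none, Option.elim_some, ← Finset.mul_sum]
    field_simp
    ring
  simp_rw [hest]
  have hmean : ∫ ω, ∑ o, w o * Y o ω + -μinit / (ε * b) ∂ℙ = d := by
    rw [integral_sum_mul_add_const_of_hasLaw_laplace hY hscale]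
    simp only [Fintype.sum_option, Option.elim_none, Option.elim_some, ← Finset.mul_sum,
      Finset.sum_add_distrib, Finset.sum_const, Finset.sum_ite_mem, Finset.univ_inter, hd,
      Finset.card_univ, Fintype.card_fin, nsmul_eq_mul, w, loc]
    field_simp
    ring
  refine ⟨hmean, ?_⟩
  rw [← hmean, ← variance_eq_integral (by fun_prop),
    variance_sum_mul_add_const_of_hasLaw_laplace hindep hY hscale]
  simp only [Fintype.sum_option, Option.elim_none, Option.elim_some, Finset.sum_const,
    Finset.card_univ, Fintype.card_fin, nsmul_eq_mul, w, scale]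
  field_simp
  ring

/-- The Laplace density estimator
`d̃ = ((1/m)·∑ᵢ xᵢ − μ_init)/(μ_upd − μ_init) + L`, where `xᵢ ~ Laplace(μ_upd, b)` for
appeared users (`i ∈ S`, `|S| = d·m`), `xᵢ ~ Laplace(μ_init, b)` otherwise, all independent,
and `L ~ Laplace(0, 1/(εm))`, with `μ_upd − μ_init = εb`, is an unbiased estimate of `d`
with mean squared error exactly `2(m+1)/(m²ε²)`. -/
theorem laplace_density_estimator_moments {Ω : Type*} [MeasureSpace Ω]
    [IsProbabilityMeasure (ℙ : Measure Ω)] (ε b : ℝ) (hε : 0 < ε) (hb : 0 < b)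
    (m : ℕ) (hm : 1 ≤ m) (μinit μupd : ℝ) (hμ : μinit < μupd)
    (hεb : μupd - μinit = ε * b)
    (S : Finset (Fin m)) (d : ℝ) (hd : (S.card : ℝ) = d * m)
    (x : Fin m → Ω → ℝ) (hxmeas : ∀ i, Measurable (x i))
    (hxlaw : ∀ i, Measure.map (x i) ℙ =
      if i ∈ S then laplaceMeasure μupd b else laplaceMeasure μinit b)
    (L : Ω → ℝ) (hLmeas : Measurable L)
    (hLlaw : Measure.map L ℙ = laplaceMeasure 0 (1 / (ε * m)))
    (hindep : iIndepFun
      (fun o : Option (Fin m) => o.elim L x) ℙ) :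
    (∫ ω, ((1 / m) * ∑ i, x i ω - μinit) / (μupd - μinit) + L ω ∂ℙ) = d ∧
    (∫ ω, (((1 / m) * ∑ i, x i ω - μinit) / (μupd - μinit) + L ω - d) ^ 2 ∂ℙ) =
      2 * (m + 1) / ((m : ℝ) ^ 2 * ε ^ 2) :=
  laplace_density_estimator_moments_general ε b hε hb m hm μinit μupd hεb S d hd x hxmeas hxlaw L
    hLmeas hLlaw hindep
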